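/- arXiv:2406.13658 — 7 statements merged into one kernel-verified Lean document; each statement's English description precedes it below -/
import Mathlib

section
/- Let M be a matroid on ground set E with dual M*, and let 1 ≤ r ≤ rk(M*). A subset A ⊆ E is dependent in the elongation E^{r-1}(M) if and only if |A ∩ B| ≥ r for every basis B of M*. -/
open Set

/-- The rank of a set `A` in a matroid `M`: the maximum size of the
intersection of `A` with a basis of `M`. -/
noncomputable def Matroid.rk' {α : Type*} (M : Matroid α) (A : Set α) : ℕ :=
  sSup {n | ∃ B, M.IsBase B ∧ (A ∩ B).ncard = n}

/-- The rank of the matroid `M` itself. -/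
noncomputable def Matroid.rank' {α : Type*} (M : Matroid α) : ℕ := M.rk' M.E

/-- Let `M` be a matroid with dual `M✶` and `1 ≤ r ≤ rk(M✶)`.  A subset `A` of the
ground set is dependent in the elongation `E^{r-1}(M)` if and only if `|A ∩ B| ≥ r`
for every basis `B` of `M✶`. -/
theorem stmt_4 {α : Type*} (M : Matroid α) (hfin : M.E.Finite) (r : ℕ)
    (hr1 : 1 ≤ r) (hr2 : r ≤ M✶.rank')
    (El : Matroid α) (hElE : El.E = M.E)
    (hEl : ∀ A, El.Indep A ↔ A ⊆ M.E ∧ (A.ncard : ℤ) - (M.rk' A : ℤ) ≤ (r : ℤ) - 1)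
    (A : Set α) (hA : A ⊆ M.E) :
    El.Dep A ↔ ∀ B, M✶.IsBase B → r ≤ (A ∩ B).ncard := by
  have hAfin : A.Finite := hfin.subset hA
  have hSne : {n | ∃ B, M.IsBase B ∧ (A ∩ B).ncard = n}.Nonempty := by
    obtain ⟨B, hB⟩ := M.exists_isBase
    exact ⟨_, B, hB, rfl⟩
  have hbdd : ∀ n ∈ {n | ∃ B, M.IsBase B ∧ (A ∩ B).ncard = n}, n ≤ A.ncard := by
    rintro n ⟨B, hB, rfl⟩
    exact Set.ncard_le_ncard Set.inter_subset_left hAfin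
  have hmem : M.rk' A ∈ {n | ∃ B, M.IsBase B ∧ (A ∩ B).ncard = n} :=
    Nat.sSup_mem hSne ⟨A.ncard, hbdd⟩
  have hub : ∀ B, M.IsBase B → (A ∩ B).ncard ≤ M.rk' A := fun B hB =>
    le_csSup ⟨A.ncard, hbdd⟩ ⟨B, hB, rfl⟩
  have key : ∀ B, B ⊆ M.E → (A ∩ (M.E \ B)).ncard = A.ncard - (A ∩ B).ncard := by
    intro B _
    have h1 : A ∩ (M.E \ B) = A \ (A ∩ B) := by
      ext x
      constructor
      · rintro ⟨hx, -, hxB⟩; exact ⟨hx, fun h => hxB h.2⟩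
      · rintro ⟨hx, h⟩; exact ⟨hx, hA hx, fun hb => h ⟨hx, hb⟩⟩
    rw [h1, Set.ncard_diff Set.inter_subset_left (hAfin.subset Set.inter_subset_left)]
  rw [Matroid.dep_iff, hEl]
  constructor
  · rintro ⟨h, -⟩ B hB
    rw [Matroid.dual_isBase_iff'] at hB
    have h1 := hub _ hB.1
    have h2 := key (M.E \ B) Set.diff_subset
    rw [Set.diff_diff_cancel_left hB.2] at h2
    have h3 : (A ∩ (M.E \ B)).ncard ≤ A.ncard :=
      Set.ncard_le_ncard Set.inter_subset_left hAfin
    have hh : ¬((A.ncard : ℤ) - (M.rk' A : ℤ) ≤ (r : ℤ) - 1) := fun c => h ⟨hA, c⟩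
    omega
  · intro h
    obtain ⟨B0, hB0, hcard⟩ := hmem
    have hd := h _ hB0.compl_isBase_dual
    have h2 := key _ hB0.subset_ground
    have h3 : (A ∩ B0).ncard ≤ A.ncard :=
      Set.ncard_le_ncard Set.inter_subset_left hAfin
    refine ⟨?_, hElE ▸ hA⟩
    push_neg
    omega
end

section
/- Let M be a matroid on ground set E with dual M*, and let 1 ≤ r ≤ rk(M*). The bases of the elongation E^{r-1}(M) are exactly the complements of the independent sets of M* of cardinality rk(M*) - r + 1. -/
open Set

namespace Matroid

variable {α : Type*} {M : Matroid α} {A B I J X Y : Set α}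

lemma Basis.ncard_eq_ncard_basis (h1 : M.IsBasis I X) (h2 : M.IsBasis J X) :
    I.ncard = J.ncard :=
  h1.restrict_isBase.ncard_eq_ncard_of_isBase h2.restrict_isBase

lemma rk'_eq_of_basis (hfin : M.E.Finite) (hJ : M.IsBasis J A) : M.rk' A = J.ncard := by
  have hA : A ⊆ M.E := hJ.subset_ground
  apply le_antisymm
  · apply csSup_le
    · obtain ⟨B, hB⟩ := M.exists_isBase
      exact ⟨_, B, hB, rfl⟩
    · rintro n ⟨B, hB, rfl⟩
      have hi : M.Indep (A ∩ B) := hB.indep.subset inter_subset_right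
      obtain ⟨J', hJ'A, hJ'⟩ := hi.subset_isBasis_of_subset inter_subset_left hA
      calc (A ∩ B).ncard ≤ J'.ncard :=
            ncard_le_ncard hJ' (hfin.subset hJ'A.indep.subset_ground)
        _ = J.ncard := Basis.ncard_eq_ncard_basis hJ'A hJ
  · obtain ⟨B, hB, hJB⟩ := hJ.indep.exists_isBase_superset
    have hAB : A ∩ B = J :=
      (hJ.eq_of_subset_indep (hB.indep.subset inter_subset_right)
        (subset_inter hJ.subset hJB) inter_subset_left).symm
    apply le_csSup
    · refine ⟨M.E.ncard, ?_⟩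
      rintro n ⟨B', hB', rfl⟩
      exact ncard_le_ncard (inter_subset_right.trans hB'.subset_ground) hfin
    · exact ⟨B, hB, by rw [hAB]⟩

lemma indep_ncard_le_rk' (hfin : M.E.Finite) (hI : M.Indep I) (hIA : I ⊆ A)
    (hA : A ⊆ M.E) : I.ncard ≤ M.rk' A := by
  obtain ⟨J, hJ, hIJ⟩ := hI.subset_isBasis_of_subset hIA hA
  rw [rk'_eq_of_basis hfin hJ]
  exact ncard_le_ncard hIJ (hfin.subset hJ.indep.subset_ground)

lemma rk'_mono (hfin : M.E.Finite) (hXY : X ⊆ Y) (hY : Y ⊆ M.E) :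
    M.rk' X ≤ M.rk' Y := by
  obtain ⟨J, hJ⟩ := M.exists_isBasis X (hXY.trans hY)
  rw [rk'_eq_of_basis hfin hJ]
  exact indep_ncard_le_rk' hfin hJ.indep (hJ.subset.trans hXY) hY

lemma rank'_eq_of_base (hfin : M.E.Finite) (hB : M.IsBase B) : M.rank' = B.ncard :=
  rk'_eq_of_basis hfin hB.isBasis_ground

lemma rk'_le_rank' (hfin : M.E.Finite) (hA : A ⊆ M.E) : M.rk' A ≤ M.rank' :=
  rk'_mono hfin hA Subset.rfl

lemma base_of_indep_ncard (hfin : M.E.Finite) (hI : M.Indep I)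
    (hcard : M.rank' ≤ I.ncard) : M.IsBase I := by
  obtain ⟨B, hB, hIB⟩ := hI.exists_isBase_superset
  have : I = B := eq_of_subset_of_ncard_le hIB
    (by rw [← rank'_eq_of_base hfin hB]; exact hcard) (hfin.subset hB.subset_ground)
  rwa [this]

end Matroid

/-- Let `M` be a matroid with dual `M✶` and `1 ≤ r ≤ rk(M✶)`.  The bases of the
elongation `E^{r-1}(M)` are exactly the complements of the independent sets of `M✶`
of cardinality `rk(M✶) - r + 1`. -/
theorem stmt_5 {α : Type*} (M : Matroid α) (hfin : M.E.Finite) (r : ℕ)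
    (hr1 : 1 ≤ r) (hr2 : r ≤ M✶.rank')
    (El : Matroid α) (hElE : El.E = M.E)
    (hEl : ∀ A, El.Indep A ↔ A ⊆ M.E ∧ (A.ncard : ℤ) - (M.rk' A : ℤ) ≤ (r : ℤ) - 1) :
    ∀ B, El.IsBase B ↔
      ∃ I, M✶.Indep I ∧ I.ncard = M✶.rank' - r + 1 ∧ B = M.E \ I := by
  obtain ⟨B₀, hB₀⟩ := M.exists_isBase
  have hB₀E : B₀ ⊆ M.E := hB₀.subset_ground
  have hfin' : (M✶).E.Finite := by rwa [Matroid.dual_ground]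
  have hrank : M.rank' = B₀.ncard := Matroid.rank'_eq_of_base hfin hB₀
  have hkstar : M✶.rank' = (M.E \ B₀).ncard :=
    Matroid.rank'_eq_of_base hfin' hB₀.compl_isBase_dual
  have hdiff : (M.E \ B₀).ncard = M.E.ncard - B₀.ncard := ncard_diff hB₀E (hfin.subset hB₀E)
  have hB₀le : B₀.ncard ≤ M.E.ncard := ncard_le_ncard hB₀E hfin
  have hsum : M.rank' + M✶.rank' = M.E.ncard := by omega
  intro B
  constructor
  · intro hBase
    obtain ⟨hBE, hcard⟩ := (hEl B).mp hBase.indep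
    have hBfin : B.Finite := hfin.subset hBE
    -- maximality consequence
    have hmax : ∀ e ∈ M.E \ B, ((r : ℤ) : ℤ) ≤ ((B.ncard : ℤ) + 1) - (M.rk' (insert e B) : ℤ) := by
      rintro e ⟨heE, heB⟩
      have hni : ¬ El.Indep (insert e B) := by
        intro hi
        exact heB (by simpa using (hBase.eq_of_subset_indep hi (subset_insert e B)).symm ▸
          (mem_insert e B))
      rw [hEl] at hni
      push_neg at hni
      have h2 := hni (insert_subset heE hBE)
      rw [ncard_insert_of_notMem heB hBfin] at h2
      push_cast at h2 ⊢
      omega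
    obtain ⟨J, hJ⟩ := M.exists_isBasis B hBE
    have hrkB : M.rk' B = J.ncard := Matroid.rk'_eq_of_basis hfin hJ
    have hJfin : J.Finite := hfin.subset hJ.indep.subset_ground
    -- Step 1 : B is spanning
    have hspan : M.rk' B = M.rank' := by
      by_contra hne
      have hlt : M.rk' B < M.rank' :=
        lt_of_le_of_ne (Matroid.rk'_le_rank' hfin hBE) hne
      obtain ⟨B', hB', hJB'⟩ := hJ.indep.exists_isBase_superset
      have hB'card : B'.ncard = M.rank' := (Matroid.rank'_eq_of_base hfin hB').symm
      have hnsub : ¬ B' ⊆ J := by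
        intro hsub
        have := ncard_le_ncard hsub hJfin
        omega
      obtain ⟨e, heB', heJ⟩ := not_subset.mp hnsub
      have heE : e ∈ M.E := hB'.subset_ground heB'
      have heB : e ∉ B := by
        intro heB
        have hiJ : M.Indep (insert e J) :=
          hB'.indep.subset (insert_subset heB' hJB')
        have := hJ.eq_of_subset_indep hiJ (subset_insert e J)
          (insert_subset heB hJ.subset)
        exact heJ (this ▸ mem_insert e J)
      have hle : (insert e J).ncard ≤ M.rk' (insert e B) :=
        Matroid.indep_ncard_le_rk' hfin
          (hB'.indep.subset (insert_subset heB' hJB'))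
          (insert_subset_insert hJ.subset) (insert_subset heE hBE)
      rw [ncard_insert_of_notMem heJ hJfin] at hle
      have := hmax e ⟨heE, heB⟩
      omega
    -- Step 2 : cardinality of B
    have hBcard : (B.ncard : ℤ) = (M.rank' : ℤ) + r - 1 := by
      rw [hspan] at hcard
      refine le_antisymm (by omega) ?_
      by_contra hlt
      push_neg at hlt
      have hlt' : B.ncard < M.E.ncard := by omega
      have hne : (M.E \ B).Nonempty := by
        rw [← ncard_pos (hfin.diff (t := B)), ncard_diff hBE (hfin.subset hBE)]
        omega
      obtain ⟨e, he⟩ := hne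
      have hle : M.rk' B ≤ M.rk' (insert e B) :=
        Matroid.rk'_mono hfin (subset_insert e B) (insert_subset he.1 hBE)
      have := hmax e he
      rw [hspan] at hle
      omega
    -- build the coindependent set
    refine ⟨M.E \ B, ?_, ?_, (diff_diff_cancel_left hBE).symm⟩
    · rw [Matroid.dual_indep_iff_exists (diff_subset)]
      refine ⟨J, ?_, disjoint_sdiff_left.mono_right hJ.subset⟩
      apply Matroid.base_of_indep_ncard hfin hJ.indep
      rw [← hrkB, hspan]
    · have : (M.E \ B).ncard = M.E.ncard - B.ncard := ncard_diff hBE (hfin.subset hBE)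
      omega
  · rintro ⟨I, hI, hIcard, rfl⟩
    have hIE : I ⊆ M.E := hI.subset_ground
    have hBE : M.E \ I ⊆ M.E := diff_subset
    obtain ⟨hIE', B', hB', hdisj⟩ := Matroid.dual_indep_iff_exists'.mp hI
    have hB'sub : B' ⊆ M.E \ I :=
      subset_diff.mpr ⟨hB'.subset_ground, hdisj.symm⟩
    have hIle : I.ncard ≤ M.E.ncard := ncard_le_ncard hIE hfin
    have hBcard : ((M.E \ I).ncard : ℤ) = (M.rank' : ℤ) + r - 1 := by
      rw [ncard_diff hIE (hfin.subset hIE)]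
      omega
    have hrkB : M.rk' (M.E \ I) = M.rank' := by
      refine le_antisymm (Matroid.rk'_le_rank' hfin hBE) ?_
      rw [Matroid.rank'_eq_of_base hfin hB']
      exact Matroid.indep_ncard_le_rk' hfin hB'.indep hB'sub hBE
    rw [Matroid.isBase_iff_maximal_indep]
    constructor
    · rw [hEl]
      exact ⟨hBE, by omega⟩
    · intro A hA hBA
      obtain ⟨hAE, hAcard⟩ := (hEl A).mp hA
      have hrkA : M.rk' A ≤ M.rank' := Matroid.rk'_le_rank' hfin hAE
      have : M.E \ I = A :=
        eq_of_subset_of_ncard_le hBA (by omega) (hfin.subset hAE)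
      rw [← this]
end

section
/- Let M be a matroid of rank k on a ground set of size n. The generalized Hamming weights of M are strictly increasing: d_1(M) < d_2(M) < ... < d_{n-k}(M), where d_r(M) is the minimum cardinality of a subset A with |A| - rk_M(A) ≥ r. -/
open Set

lemma rk'_mono_aux {α : Type*} (M : Matroid α) {A' A : Set α} (hA : A.Finite) (h : A' ⊆ A) :
    M.rk' A' ≤ M.rk' A := by
  obtain ⟨B0, hB0⟩ := M.exists_isBase
  have hbdd : BddAbove {n | ∃ B, M.IsBase B ∧ (A ∩ B).ncard = n} := by
    refine ⟨A.ncard, ?_⟩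
    rintro m ⟨B, hB, rfl⟩
    exact ncard_le_ncard inter_subset_left hA
  unfold Matroid.rk'
  refine csSup_le ⟨(A' ∩ B0).ncard, B0, hB0, rfl⟩ ?_
  rintro m ⟨B, hB, rfl⟩
  calc (A' ∩ B).ncard ≤ (A ∩ B).ncard :=
        ncard_le_ncard (inter_subset_inter_left _ h) (hA.inter_of_left _)
    _ ≤ sSup {n | ∃ B, M.IsBase B ∧ (A ∩ B).ncard = n} := le_csSup hbdd ⟨B, hB, rfl⟩

/-- The generalized Hamming weights of a matroid `M` of rank `k` on an `n`-element ground
set are strictly increasing: `d_1(M) < d_2(M) < ⋯ < d_{n-k}(M)`, where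
`d_r(M) = min { |A| : A ⊆ E, |A| - rk_M(A) ≥ r }`. -/
theorem stmt_7 {α : Type*} (M : Matroid α) (hfin : M.E.Finite) (n k : ℕ)
    (hn : M.E.ncard = n) (hk : M.rank' = k) (hnk : 1 ≤ n - k) :
    ∀ r : ℕ, 1 ≤ r → r + 1 ≤ n - k →
      sInf {m | ∃ A, A ⊆ M.E ∧ M.rk' A + r ≤ A.ncard ∧ A.ncard = m} <
        sInf {m | ∃ A, A ⊆ M.E ∧ M.rk' A + (r + 1) ≤ A.ncard ∧ A.ncard = m} := by
  intro r hr hr1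
  have hkE : M.rk' M.E = k := hk
  have hne : {m | ∃ A, A ⊆ M.E ∧ M.rk' A + (r + 1) ≤ A.ncard ∧ A.ncard = m}.Nonempty := by
    refine ⟨n, M.E, subset_rfl, ?_, hn⟩
    rw [hkE, hn]
    omega
  obtain ⟨A, hAE, hrk, hcard⟩ :=
    Nat.sInf_mem (s := {m | ∃ A, A ⊆ M.E ∧ M.rk' A + (r + 1) ≤ A.ncard ∧ A.ncard = m}) hne
  set d := sInf {m | ∃ A, A ⊆ M.E ∧ M.rk' A + (r + 1) ≤ A.ncard ∧ A.ncard = m} with hd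
  have hAfin : A.Finite := hfin.subset hAE
  have hApos : 2 ≤ A.ncard := by omega
  have hAne : A.Nonempty := by
    rw [← A.ncard_pos hAfin]; omega
  obtain ⟨e, he⟩ := hAne
  have hcard' : (A \ {e}).ncard = A.ncard - 1 := ncard_diff_singleton_of_mem he
  have hmono : M.rk' (A \ {e}) ≤ M.rk' A := rk'_mono_aux M hAfin diff_subset
  have hle : sInf {m | ∃ A, A ⊆ M.E ∧ M.rk' A + r ≤ A.ncard ∧ A.ncard = m} ≤ d - 1 := by
    apply Nat.sInf_le
    exact ⟨A \ {e}, diff_subset.trans hAE, by omega, by omega⟩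
  omega
end

section
/- Let B1, B2 be bases of a matroid M and let f : B1 → B2 be a bijection such that (B1 \ {e}) ∪ {f(e)} is a basis of M for every e ∈ B1. Then f(e) = e for every e ∈ B1 ∩ B2. -/
open Set

/-- If `B1, B2` are bases of a matroid `M` and `f : B1 → B2` is a bijection such that
`(B1 \ {e}) ∪ {f(e)}` is a basis of `M` for every `e ∈ B1`, then `f(e) = e` for every
`e ∈ B1 ∩ B2`. -/
theorem stmt_8 {α : Type*} (M : Matroid α) (B1 B2 : Set α)
    (hB1 : M.IsBase B1) (hB2 : M.IsBase B2)
    (f : B1 → B2) (hbij : Function.Bijective f)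
    (hex : ∀ e : B1, M.IsBase (insert (f e : α) (B1 \ {(e : α)}))) :
    ∀ e : B1, (e : α) ∈ B2 → (f e : α) = (e : α) := by
  intro e he
  -- By surjectivity, find e₀ with f e₀ = e
  obtain ⟨e₀, he₀⟩ := hbij.2 ⟨(e : α), he⟩
  by_cases h : e₀ = e
  · rw [h] at he₀; rw [he₀]
  · exfalso
    have hne : (e : α) ≠ (e₀ : α) := fun hh => h (Subtype.ext hh.symm)
    have hbase := hex e₀
    rw [he₀] at hbase
    have heq : insert (e : α) (B1 \ {(e₀ : α)}) = B1 \ {(e₀ : α)} := by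
      apply insert_eq_self.mpr
      exact ⟨e.2, hne⟩
    rw [heq] at hbase
    have := hbase.eq_of_subset_isBase hB1 diff_subset
    have h3 : (e₀ : α) ∈ B1 \ {(e₀ : α)} := by rw [this]; exact e₀.2
    exact h3.2 rfl
end

section
/- Let S = (E, 𝔅) be a Steiner system of type S(t, k, n) with t < k < n, i.e., 𝔅 is a collection of k-element subsets (blocks) of the n-element set E such that every t-element subset of E is contained in exactly one block. Then every (k-1)-element subset of E is contained in some k-element subset of E that is not a block. -/
/-- Let `(E, 𝔅)` be a Steiner system of type `S(t, k, n)` with `t < k < n`: the blocks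
are `k`-element subsets of the `n`-element set `E` and every `t`-element subset of `E`
lies in exactly one block.  Then every `(k-1)`-element subset of `E` is contained in a
`k`-element subset of `E` that is not a block. -/
theorem stmt_16 {α : Type*} [DecidableEq α] (E : Finset α) (𝔅 : Finset (Finset α))
    (t k n : ℕ) (htk : t < k) (hkn : k < n) (hE : E.card = n)
    (hblocks : ∀ b ∈ 𝔅, b ⊆ E ∧ b.card = k)
    (hSteiner : ∀ T ⊆ E, T.card = t → ∃! b, b ∈ 𝔅 ∧ T ⊆ b) :
    ∀ U ⊆ E, U.card = k - 1 →
      ∃ V, U ⊆ V ∧ V ⊆ E ∧ V.card = k ∧ V ∉ 𝔅 := by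
  intro U hUE hUcard
  -- two distinct elements outside U
  have hcard : 1 < (E \ U).card := by
    have : (E \ U).card = n - (k - 1) := by
      rw [Finset.card_sdiff_of_subset hUE, hE, hUcard]
    omega
  obtain ⟨x, hx, y, hy, hxy⟩ := Finset.one_lt_card.mp hcard
  obtain ⟨hxE, hxU⟩ := Finset.mem_sdiff.mp hx
  obtain ⟨hyE, hyU⟩ := Finset.mem_sdiff.mp hy
  -- a t-subset of U
  obtain ⟨T, hTU, hTcard⟩ := Finset.exists_subset_card_eq (show t ≤ U.card by omega)
  have hTE : T ⊆ E := hTU.trans hUE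
  obtain ⟨b, _, hb⟩ := hSteiner T hTE hTcard
  have key : ∀ z ∈ E, z ∉ U → insert z U ∈ 𝔅 → insert z U = b := by
    intro z _ hzU hmem
    exact hb _ ⟨hmem, hTU.trans (Finset.subset_insert _ _)⟩
  have cardins : ∀ z ∉ U, (insert z U).card = k := by
    intro z hz
    rw [Finset.card_insert_of_notMem hz, hUcard]; omega
  by_cases hxb : insert x U ∈ 𝔅
  · refine ⟨insert y U, Finset.subset_insert _ _, Finset.insert_subset hyE hUE,
      cardins y hyU, fun hyb => ?_⟩
    have := (key x hxE hxU hxb).trans (key y hyE hyU hyb).symm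
    have : x ∈ insert y U := this ▸ Finset.mem_insert_self x U
    rcases Finset.mem_insert.mp this with h | h
    · exact hxy h
    · exact hxU h
  · exact ⟨insert x U, Finset.subset_insert _ _, Finset.insert_subset hxE hUE,
      cardins x hxU, hxb⟩
end

section
/- Let M be a matroid on ground set E of size n with rank k, let B ⊆ E be a basis of the dual matroid M*, and let a : E → ℕ. Suppose there exists a basis B' of M* with Σ_{i ∈ B'} a_i = s and, for A := max_i a_i and U := {i ∈ E : a_i = A}, set t := min{|B'' ∩ U| : B'' a basis of M*}. If Σ_{i ∈ B''} a_i ≥ s for every basis B'' of M*, then Σ_{i ∈ B} a_i ≥ s + |B ∩ U| - t. -/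
open Set

private lemma fsum_eq {α : Type*} (a : α → ℕ) {s : Set α} (hs : s.Finite) :
    ∑ᶠ i ∈ s, a i = ∑ i ∈ hs.toFinset, a i := by
  rw [← finsum_mem_coe_finset]; simp

private lemma fsum_split {α : Type*} (a : α → ℕ) {s t : Set α} (hst : Disjoint s t)
    (hs : s.Finite) (ht : t.Finite) :
    ∑ᶠ i ∈ s ∪ t, a i = (∑ᶠ i ∈ s, a i) + ∑ᶠ i ∈ t, a i :=
  finsum_mem_union hst hs ht

private lemma fsum_le {α : Type*} (a : α → ℕ) {s : Set α} (hs : s.Finite) {c : ℕ}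
    (h : ∀ i ∈ s, a i ≤ c) : ∑ᶠ i ∈ s, a i ≤ s.ncard * c := by
  rw [fsum_eq a hs, ncard_eq_toFinset_card s hs]
  simpa using Finset.sum_le_card_nsmul hs.toFinset a c (by simpa using h)

/-- Let `M` be a matroid of rank `k` on a finite ground set of size `n`, `a : E → ℕ` a
weight function with `∑_{i ∈ B''} a_i ≥ s` for every basis `B''` of `M✶` and
`∑_{i ∈ B'} a_i = s` for some basis `B'` of `M✶`.  Let `A = max_i a_i`,
`U = {i ∈ E : a_i = A}` and `t = min{|B'' ∩ U| : B''` a basis of `M✶}.  Then every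
basis `B` of `M✶` satisfies `∑_{i ∈ B} a_i ≥ s + |B ∩ U| - t`. -/
theorem stmt_18 {α : Type*} (M : Matroid α) (hfin : M.E.Finite) (n k : ℕ)
    (hn : M.E.ncard = n) (hk : M.rank' = k)
    (a : α → ℕ) (s : ℕ)
    (hub : ∀ B'', M✶.IsBase B'' → s ≤ ∑ᶠ i ∈ B'', a i)
    (B' : Set α) (hB' : M✶.IsBase B') (hsum : ∑ᶠ i ∈ B', a i = s)
    (B : Set α) (hB : M✶.IsBase B) :
    (s : ℤ) + ((B ∩ {i ∈ M.E | a i = sSup {m | ∃ i ∈ M.E, a i = m}}).ncard : ℤ) -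
        (sInf {m | ∃ B'', M✶.IsBase B'' ∧
          (B'' ∩ {i ∈ M.E | a i = sSup {l | ∃ i ∈ M.E, a i = l}}).ncard = m} : ℤ) ≤
      ((∑ᶠ i ∈ B, a i : ℕ) : ℤ) := by
  clear hn hk hB' hsum
  set A : ℕ := sSup {m | ∃ i ∈ M.E, a i = m} with hA
  set U : Set α := {i ∈ M.E | a i = A} with hU
  set t : ℕ := sInf {m | ∃ B'', M✶.IsBase B'' ∧ (B'' ∩ U).ncard = m} with ht
  -- basic facts about A
  have hval : {m | ∃ i ∈ M.E, a i = m} = a '' M.E := by ext m; simp [eq_comm]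
  have hbdd : BddAbove {m | ∃ i ∈ M.E, a i = m} := by
    rw [hval]; exact (hfin.image a).bddAbove
  have haA : ∀ i ∈ M.E, a i ≤ A := fun i hi => le_csSup hbdd ⟨i, hi, rfl⟩
  have haU : ∀ i ∈ M.E, i ∉ U → a i + 1 ≤ A := by
    intro i hi hiU
    have h1 : a i ≤ A := haA i hi
    have h2 : a i ≠ A := fun h => hiU ⟨hi, h⟩
    omega
  -- B₀ attaining the minimum t
  have htmem : t ∈ {m | ∃ B'', M✶.IsBase B'' ∧ (B'' ∩ U).ncard = m} :=
    Nat.sInf_mem ⟨(B ∩ U).ncard, B, hB, rfl⟩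
  obtain ⟨B₀, hB₀, hB₀U⟩ := htmem
  -- ground set facts
  have hBE : B ⊆ M.E := hB.subset_ground
  have hB₀E : B₀ ⊆ M.E := hB₀.subset_ground
  set S : Set α := B ∩ U with hS
  have hSB : S ⊆ B := inter_subset_left
  have hSU : S ⊆ U := inter_subset_right
  -- extend B \ S to a basis inside (B \ S) ∪ B₀
  obtain ⟨B₂, hB₂, hsub, hsub2⟩ :=
    (hB.indep.subset (diff_subset (t := S))).exists_isBase_subset_union_isBase hB₀
  have hB₂E : B₂ ⊆ M.E := hB₂.subset_ground
  set T : Set α := B₂ \ (B \ S) with hT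
  have hTB₀ : T ⊆ B₀ := by
    intro x hx
    rcases hsub2 hx.1 with h | h
    · exact absurd h hx.2
    · exact h
  -- finiteness
  have hfB : B.Finite := hfin.subset hBE
  have hfB₂ : B₂.Finite := hfin.subset hB₂E
  have hfBS : (B \ S).Finite := hfB.diff (t := _)
  have hfT : T.Finite := hfB₂.diff (t := _)
  have hfS : S.Finite := hfB.subset hSB
  -- cardinalities
  have hcard : B₂.ncard = B.ncard := hB₂.ncard_eq_ncard_of_isBase hB
  have hc1 : (B \ S).ncard + S.ncard = B.ncard :=
    ncard_diff_add_ncard_of_subset hSB hfB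
  have hc2 : (B \ S).ncard + T.ncard = B₂.ncard := by
    rw [← ncard_union_eq disjoint_sdiff_right hfBS hfT, union_diff_cancel hsub]
  have hTS : T.ncard = S.ncard := by omega
  have hc3 : (T ∩ U).ncard + (T \ U).ncard = T.ncard :=
    ncard_inter_add_ncard_diff_eq_ncard T U hfT
  have hTU : (T ∩ U).ncard ≤ t := by
    rw [← hB₀U]
    exact ncard_le_ncard (inter_subset_inter_left _ hTB₀) (hfin.subset hB₀E |>.inter_of_left _)
  -- sums
  have e1 : ∑ᶠ i ∈ B, a i = (∑ᶠ i ∈ B \ S, a i) + S.ncard * A := by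
    have hSA : ∑ᶠ i ∈ S, a i = S.ncard * A := by
      rw [fsum_eq a hfS, ncard_eq_toFinset_card S hfS]
      rw [Finset.sum_congr rfl (fun i hi => ((hfS.mem_toFinset.mp hi) |> hSU : i ∈ U).2)]
      simp [mul_comm]
    rw [← hSA, ← fsum_split a disjoint_sdiff_left hfBS hfS, diff_union_of_subset hSB]
  have e2 : s ≤ (∑ᶠ i ∈ B \ S, a i) + ∑ᶠ i ∈ T, a i := by
    have := hub B₂ hB₂
    rwa [← union_diff_cancel hsub, fsum_split a disjoint_sdiff_right hfBS hfT] at this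
  have e3 : (∑ᶠ i ∈ T, a i) + (T \ U).ncard ≤ T.ncard * A := by
    have h1 : ∑ᶠ i ∈ T ∩ U, a i ≤ (T ∩ U).ncard * A :=
      fsum_le a (hfT.inter_of_left _) (fun i hi => haA i (hB₂E hi.1.1))
    have h2 : (∑ᶠ i ∈ T \ U, a i) + (T \ U).ncard ≤ (T \ U).ncard * A := by
      have h0 := fsum_le (fun i => a i + 1) (hfT.diff (t := U))
        (fun i hi => haU i (hB₀E (hTB₀ hi.1)) hi.2)
      have hs1 : ∑ᶠ i ∈ T \ U, (a i + 1) = (∑ᶠ i ∈ T \ U, a i) + (T \ U).ncard := by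
        rw [fsum_eq _ (hfT.diff (t := U)), fsum_eq a (hfT.diff (t := U)), Finset.sum_add_distrib,
          Finset.sum_const, smul_eq_mul, mul_one, ncard_eq_toFinset_card _ (hfT.diff (t := U))]
      rw [hs1] at h0
      exact h0
    have hsplit : ∑ᶠ i ∈ T, a i = (∑ᶠ i ∈ T ∩ U, a i) + ∑ᶠ i ∈ T \ U, a i := by
      rw [← fsum_split a
        (disjoint_of_subset_left inter_subset_right disjoint_sdiff_right)
        (hfT.inter_of_left _) (hfT.diff (t := _)), inter_union_diff]
    calc (∑ᶠ i ∈ T, a i) + (T \ U).ncard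
        ≤ (T ∩ U).ncard * A + (T \ U).ncard * A := by rw [hsplit]; omega
      _ = T.ncard * A := by rw [← hc3]; ring
  -- put it together
  have hmain : s + S.ncard ≤ (∑ᶠ i ∈ B, a i) + t := by
    rw [hTS] at e3
    have key : s + (T \ U).ncard ≤ ∑ᶠ i ∈ B, a i := by omega
    omega
  rw [← hB₀U] at hmain
  have hne : ((B ∩ U).ncard : ℤ) ∈
      {m : ℤ | ∃ B'', M✶.IsBase B'' ∧ ((B'' ∩ U).ncard : ℤ) = m} := ⟨B, hB, rfl⟩
  have hZ : ((B₀ ∩ U).ncard : ℤ) ≤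
      sInf {m : ℤ | ∃ B'', M✶.IsBase B'' ∧ ((B'' ∩ U).ncard : ℤ) = m} := by
    refine le_csInf ⟨_, hne⟩ ?_
    rintro m ⟨B'', hB''1, rfl⟩
    have h5 : t ≤ (B'' ∩ U).ncard := Nat.sInf_le ⟨B'', hB''1, rfl⟩
    rw [hB₀U]
    exact_mod_cast h5
  push_cast
  omega
end

section
/- Let D ≥ 1 and let {d_i}_{i=1}^D be a sequence of positive integers. Define δ : ℕ_{≥1} → ℕ by δ_n = q·d_D + d_r when n = qD + r with q ∈ ℕ and 1 ≤ r ≤ D (so δ_{qD} = q d_D). Then δ is subadditive (δ_{m+n} ≤ δ_m + δ_n for all m, n ≥ 1) if and only if {d_i}_{i=1}^D is extended subadditive, meaning: d_{i+j} ≤ d_i + d_j whenever i + j ≤ D, and d_r + d_D ≤ d_t + d_{D+r-t} whenever 1 ≤ r < t ≤ D. -/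
/-- Let `{d_i}_{i=1}^D` be a sequence of positive integers and define
`δ_n = q·d_D + d_r` when `n = qD + r` with `1 ≤ r ≤ D` (so `δ_{qD} = q·d_D`).  Then `δ`
is subadditive on positive integers if and only if `{d_i}` is extended subadditive:
`d_{i+j} ≤ d_i + d_j` whenever `i + j ≤ D`, and `d_r + d_D ≤ d_t + d_{D+r-t}` whenever
`1 ≤ r < t ≤ D`. -/
theorem stmt_19 (D : ℕ) (hD : 1 ≤ D) (d : ℕ → ℕ)
    (hpos : ∀ i, 1 ≤ i → i ≤ D → 0 < d i) :
    (∀ m n : ℕ, 1 ≤ m → 1 ≤ n →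
        (fun l => ((l - 1) / D) * d D + d ((l - 1) % D + 1)) (m + n) ≤
          (fun l => ((l - 1) / D) * d D + d ((l - 1) % D + 1)) m +
            (fun l => ((l - 1) / D) * d D + d ((l - 1) % D + 1)) n) ↔
      ((∀ i j, 1 ≤ i → 1 ≤ j → i + j ≤ D → d (i + j) ≤ d i + d j) ∧
        (∀ r t, 1 ≤ r → r < t → t ≤ D → d r + d D ≤ d t + d (D + r - t))) := by
  have hD0 : 0 < D := hD
  have keyq : ∀ a s : ℕ, 1 ≤ s → s ≤ D → (a * D + s - 1) / D = a := by
    intro a s hs1 hsD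
    rw [show a * D + s - 1 = (s - 1) + a * D by omega,
      Nat.add_mul_div_right _ _ hD0, Nat.div_eq_of_lt (by omega)]
    omega
  have keyr : ∀ a s : ℕ, 1 ≤ s → s ≤ D → (a * D + s - 1) % D = s - 1 := by
    intro a s hs1 hsD
    rw [show a * D + s - 1 = (s - 1) + a * D by omega,
      Nat.add_mul_mod_self_right, Nat.mod_eq_of_lt (by omega)]
  constructor
  · intro h
    constructor
    · intro i j hi hj hij
      have H := h i j hi hj
      simp only at H
      have q1 : (i - 1) / D = 0 := by
        have := keyq 0 i hi (by omega); simpa using this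
      have r1 : (i - 1) % D = i - 1 := by
        have := keyr 0 i hi (by omega); simpa using this
      have q2 : (j - 1) / D = 0 := by
        have := keyq 0 j hj (by omega); simpa using this
      have r2 : (j - 1) % D = j - 1 := by
        have := keyr 0 j hj (by omega); simpa using this
      have q3 : (i + j - 1) / D = 0 := by
        have := keyq 0 (i + j) (by omega) hij; simpa using this
      have r3 : (i + j - 1) % D = i + j - 1 := by
        have := keyr 0 (i + j) (by omega) hij; simpa using this
      rw [q1, r1, q2, r2, q3, r3, show i - 1 + 1 = i by omega,
        show j - 1 + 1 = j by omega, show i + j - 1 + 1 = i + j by omega] at H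
      omega
    · intro r t hr hrt htD
      have hu1 : 1 ≤ D + r - t := by omega
      have huD : D + r - t ≤ D := by omega
      have H := h t (D + r - t) (by omega) hu1
      simp only at H
      rw [show t + (D + r - t) = D + r by omega] at H
      have q1 : (t - 1) / D = 0 := by
        have := keyq 0 t (by omega) htD; simpa using this
      have r1 : (t - 1) % D = t - 1 := by
        have := keyr 0 t (by omega) htD; simpa using this
      have q2 : (D + r - t - 1) / D = 0 := by
        have := keyq 0 (D + r - t) hu1 huD; simpa using this
      have r2 : (D + r - t - 1) % D = D + r - t - 1 := by
        have := keyr 0 (D + r - t) hu1 huD; simpa using this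
      have q3 : (D + r - 1) / D = 1 := by
        have := keyq 1 r hr (by omega)
        rwa [show 1 * D + r = D + r by ring] at this
      have r3 : (D + r - 1) % D = r - 1 := by
        have := keyr 1 r hr (by omega)
        rwa [show 1 * D + r = D + r by ring] at this
      rw [q1, r1, q2, r2, q3, r3, show t - 1 + 1 = t by omega,
        show D + r - t - 1 + 1 = D + r - t by omega, show r - 1 + 1 = r by omega] at H
      omega
  · rintro ⟨h1, h2⟩ m n hm hn
    simp only
    have decomp : ∀ l : ℕ, 1 ≤ l → ∃ a t, 1 ≤ t ∧ t ≤ D ∧ l = a * D + t ∧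
        (l - 1) / D = a ∧ (l - 1) % D = t - 1 := by
      intro l hl
      refine ⟨(l - 1) / D, (l - 1) % D + 1, by omega,
        by have := Nat.mod_lt (l - 1) hD0; omega, ?_, rfl, by omega⟩
      have h := Nat.div_add_mod (l - 1) D
      rw [mul_comm]
      omega
    obtain ⟨a, t, hs1, hsD, hm', hmq, hmr⟩ := decomp m hm
    obtain ⟨b, u, hu1, huD, hn', hnq, hnr⟩ := decomp n hn
    rw [hmq, hmr, hnq, hnr, show t - 1 + 1 = t by omega, show u - 1 + 1 = u by omega]
    have hab : (a + b) * D = a * D + b * D := by ring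
    have hab1 : (a + b + 1) * D = a * D + b * D + D := by ring
    by_cases hc : t + u ≤ D
    · have emn : m + n - 1 = (a + b) * D + (t + u) - 1 := by omega
      rw [emn, keyq _ _ (by omega) hc, keyr _ _ (by omega) hc,
        show t + u - 1 + 1 = t + u by omega, add_mul]
      have := h1 t u hs1 hu1 hc
      omega
    · have hsu1 : 1 ≤ t + u - D := by omega
      have hsuD : t + u - D ≤ D := by omega
      have emn : m + n - 1 = (a + b + 1) * D + (t + u - D) - 1 := by omega
      rw [emn, keyq _ _ hsu1 hsuD, keyr _ _ hsu1 hsuD,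
        show t + u - D - 1 + 1 = t + u - D by omega, add_mul, add_mul, one_mul]
      by_cases hud : u = D
      · rw [show t + u - D = t by omega, hud]
        omega
      · have H := h2 (t + u - D) t hsu1 (by omega) hsD
        rw [show D + (t + u - D) - t = u by omega] at H
        omega
end
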